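/- arXiv:1801.03216 — 3 statements merged into one kernel-verified Lean document; each statement's English description precedes it below -/
import Mathlib

section
/- For the sets C₁, C₂, C₃ in ℝ³ defined from any admissible sequence (t_k), there exist strictly decreasing sequences (ε_j) and (ε'_j) in (0,1) with ε_j → 0 and ε'_j → 0 such that for every j, the third coordinate of each of the three components of the unique ε_j-cycle for (C₁,C₂,C₃) equals 1, and the third coordinate of each of the three components of the unique ε'_j-cycle equals −1. -/
noncomputable section
open Real Filter

/-- ℝ³ with the Euclidean structure. -/
abbrev E3 : Type := EuclideanSpace ℝ (Fin 3)
/-- ℝ² with the Euclidean structure. -/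
abbrev E2 : Type := EuclideanSpace ℝ (Fin 2)

/-- The real inner product. -/
def ip {E : Type} [NormedAddCommGroup E] [InnerProductSpace ℝ E] (x y : E) : ℝ :=
  inner ℝ x y

/-- `w` is the metric projection of `u` onto `C`, characterised by membership
together with the variational inequality `⟪v - w, u - w⟫ ≤ 0` for all `v ∈ C`. -/
def IsProj {E : Type} [NormedAddCommGroup E] [InnerProductSpace ℝ E]
    (C : Set E) (u w : E) : Prop :=
  w ∈ C ∧ ∀ v ∈ C, inner ℝ (v - w) (u - w) ≤ (0 : ℝ)

/-- `(u₁,u₂,u₃)` is an ε-cycle for `(C₁,C₂,C₃)` with support `(w₁,w₂,w₃)`. -/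
def IsCycleWithSupport {E : Type} [NormedAddCommGroup E] [InnerProductSpace ℝ E]
    (C₁ C₂ C₃ : Set E) (ε : ℝ) (u₁ u₂ u₃ w₁ w₂ w₃ : E) : Prop :=
  IsProj C₁ u₃ w₁ ∧ IsProj C₂ u₁ w₂ ∧ IsProj C₃ u₂ w₃ ∧
    u₁ = u₃ + ε • (w₁ - u₃) ∧ u₂ = u₁ + ε • (w₂ - u₁) ∧ u₃ = u₂ + ε • (w₃ - u₂)

/-- `(u₁,u₂,u₃)` is an ε-cycle for `(C₁,C₂,C₃)`. -/
def IsCycle {E : Type} [NormedAddCommGroup E] [InnerProductSpace ℝ E]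
    (C₁ C₂ C₃ : Set E) (ε : ℝ) (u₁ u₂ u₃ : E) : Prop :=
  ∃ w₁ w₂ w₃ : E, IsCycleWithSupport C₁ C₂ C₃ ε u₁ u₂ u₃ w₁ w₂ w₃

/-- An admissible sequence: strictly increasing (on indices `k ≥ 1`), starting
at `t₁ = π/4` and converging to `π/2`. -/
def Admissible (t : ℕ → ℝ) : Prop :=
  StrictMonoOn t (Set.Ici 1) ∧ t 1 = π / 4 ∧ Tendsto t atTop (nhds (π / 2))

/-- The segment C₁ = co{(−2,2,1), (−2,2,−1)}. -/
def C1 : Set E3 := convexHull ℝ {!₂[(-2 : ℝ), 2, 1], !₂[(-2 : ℝ), 2, -1]}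

/-- The segment C₂ = co{(2,2,1), (2,2,−1)}. -/
def C2 : Set E3 := convexHull ℝ {!₂[(2 : ℝ), 2, 1], !₂[(2 : ℝ), 2, -1]}

/-- The points pₖ = (cos tₖ, sin tₖ, (−1)ᵏ). -/
def pSeq (t : ℕ → ℝ) (k : ℕ) : E3 := !₂[Real.cos (t k), Real.sin (t k), (-1 : ℝ) ^ k]

/-- C₃ = closed convex hull of {pₖ : k ≥ 1}. -/
def C3 (t : ℕ → ℝ) : Set E3 := closure (convexHull ℝ (pSeq t '' {k | 1 ≤ k}))

/-- a = (−2,2). -/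
def aPt : E2 := !₂[(-2 : ℝ), 2]
/-- b = (2,2). -/
def bPt : E2 := !₂[(2 : ℝ), 2]
/-- vₖ = (cos tₖ, sin tₖ). -/
def vSeq (t : ℕ → ℝ) (k : ℕ) : E2 := !₂[Real.cos (t k), Real.sin (t k)]
/-- C₁' = {a}. -/
def C1' : Set E2 := {aPt}
/-- C₂' = {b}. -/
def C2' : Set E2 := {bPt}
/-- C₃' = closed convex hull of {vₖ : k ≥ 1}. -/
def C3' (t : ℕ → ℝ) : Set E2 := closure (convexHull ℝ (vSeq t '' {k | 1 ≤ k}))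

/-- Projection of ℝ³ onto the xy-plane. -/
def projXY (x : E3) : E2 := !₂[x 0, x 1]

/-- Lifting a point of the xy-plane to height `z`. -/
def liftZ (p : E2) (z : ℝ) : E3 := !₂[p 0, p 1, z]

/-- The solid cylinder D. -/
def Dcyl : Set E3 := {x | x 0 ^ 2 + x 1 ^ 2 ≤ 1 ∧ |x 2| ≤ 1}


/-! For `k ≥ 2` and `ε = 2 cos tₖ / (sin tₖ + cos tₖ)` an ε-cycle can be written down explicitly:
it lies in the horizontal plane at height `(-1)ᵏ`, its support on `C₃` is the vertex `pₖ`, and its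
supports on `C₁`, `C₂` are the endpoints of the two segments at that height. Relaxed projections are
averaged maps, so any two ε-cycles differ by one common translation `d` of all points and supports.
As `C₁` is vertical, `d` is vertical; and as `pₖ` is the only point of `C₃` over
`(cos tₖ, sin tₖ)` (the other generators make an angle bounded away from zero with it), `d = 0`.
Even and odd `k` give the two sequences. -/

open scoped RealInnerProductSpace

section Projection

variable {E : Type} [NormedAddCommGroup E] [InnerProductSpace ℝ E]

theorem IsProj.norm_sub_sq_le_inner {C : Set E} {x y w w' : E} (hx : IsProj C x w)
    (hy : IsProj C y w') : ‖w - w'‖ ^ 2 ≤ ⟪w - w', x - y⟫ := by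
  have h₁ : ⟪w' - w, x - w⟫ ≤ 0 := hx.2 w' hy.1
  have h₂ : ⟪w - w', y - w'⟫ ≤ 0 := hy.2 w hx.1
  have h₃ : ⟪w - w', x - w⟫ = -⟪w' - w, x - w⟫ := by rw [← inner_neg_left, neg_sub]
  have h₄ : x - y = (x - w) - (y - w') + (w - w') := by abel
  rw [h₄, inner_add_right, inner_sub_right, real_inner_self_eq_norm_sq]
  linarith

theorem IsProj.norm_relaxed_sub_sq_add_le {C : Set E} {x y w w' : E} {ε : ℝ} (hε : 0 ≤ ε)
    (hx : IsProj C x w) (hy : IsProj C y w') :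
    ‖(x + ε • (w - x)) - (y + ε • (w' - y))‖ ^ 2 + ε * (2 - ε) * ‖(x - y) - (w - w')‖ ^ 2
      ≤ ‖x - y‖ ^ 2 := by
  have hfirm := hx.norm_sub_sq_le_inner hy
  rw [real_inner_comm] at hfirm
  have hstep : (x + ε • (w - x)) - (y + ε • (w' - y)) = (x - y) - ε • ((x - y) - (w - w')) := by
    module
  rw [hstep, norm_sub_sq_real, norm_smul, inner_smul_right, Real.norm_eq_abs, abs_of_nonneg hε,
    mul_pow, inner_sub_right, real_inner_self_eq_norm_sq, norm_sub_sq_real (x - y) (w - w')]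
  nlinarith [mul_nonneg hε (sub_nonneg.2 hfirm)]

theorem IsCycleWithSupport.exists_eq_add {C₁ C₂ C₃ : Set E} {ε : ℝ}
    {u₁ u₂ u₃ w₁ w₂ w₃ y₁ y₂ y₃ x₁ x₂ x₃ : E} (hε₀ : 0 < ε) (hε₂ : ε < 2)
    (hu : IsCycleWithSupport C₁ C₂ C₃ ε u₁ u₂ u₃ w₁ w₂ w₃)
    (hy : IsCycleWithSupport C₁ C₂ C₃ ε y₁ y₂ y₃ x₁ x₂ x₃) :
    ∃ d, y₁ = u₁ + d ∧ y₂ = u₂ + d ∧ y₃ = u₃ + d ∧ x₁ = w₁ + d ∧ x₂ = w₂ + d ∧ x₃ = w₃ + d := by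
  obtain ⟨hu₁, hu₂, hu₃, hu₁e, hu₂e, hu₃e⟩ := hu
  obtain ⟨hy₁, hy₂, hy₃, hy₁e, hy₂e, hy₃e⟩ := hy
  have h₁ := hy₁.norm_relaxed_sub_sq_add_le hε₀.le hu₁
  have h₂ := hy₂.norm_relaxed_sub_sq_add_le hε₀.le hu₂
  have h₃ := hy₃.norm_relaxed_sub_sq_add_le hε₀.le hu₃
  rw [← hy₁e, ← hu₁e] at h₁
  rw [← hy₂e, ← hu₂e] at h₂
  rw [← hy₃e, ← hu₃e] at h₃
  have hc : 0 < ε * (2 - ε) := mul_pos hε₀ (by linarith)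
  -- going once around the cycle, the three defects must all vanish
  have hzero : ∀ v : E, ε * (2 - ε) * ‖v‖ ^ 2 ≤ 0 → v = 0 := fun v hv => by
    simpa using le_antisymm (nonpos_of_mul_nonpos_right hv hc) (sq_nonneg ‖v‖)
  have e₁ : y₃ - u₃ - (x₁ - w₁) = 0 := hzero _ <| by
    nlinarith [mul_nonneg hc.le (sq_nonneg ‖y₁ - u₁ - (x₂ - w₂)‖),
      mul_nonneg hc.le (sq_nonneg ‖y₂ - u₂ - (x₃ - w₃)‖)]
  have e₂ : y₁ - u₁ - (x₂ - w₂) = 0 := hzero _ <| by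
    nlinarith [mul_nonneg hc.le (sq_nonneg ‖y₃ - u₃ - (x₁ - w₁)‖),
      mul_nonneg hc.le (sq_nonneg ‖y₂ - u₂ - (x₃ - w₃)‖)]
  have e₃ : y₂ - u₂ - (x₃ - w₃) = 0 := hzero _ <| by
    nlinarith [mul_nonneg hc.le (sq_nonneg ‖y₃ - u₃ - (x₁ - w₁)‖),
      mul_nonneg hc.le (sq_nonneg ‖y₁ - u₁ - (x₂ - w₂)‖)]
  have d₁ : y₁ - u₁ = y₃ - u₃ := by linear_combination (norm := module) hy₁e - hu₁e - ε • e₁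
  have d₂ : y₂ - u₂ = y₃ - u₃ := by
    linear_combination (norm := module) hy₂e - hu₂e - ε • e₂ + d₁
  refine ⟨y₃ - u₃, ?_, ?_, ?_, ?_, ?_, ?_⟩
  · linear_combination (norm := module) d₁
  · linear_combination (norm := module) d₂
  · module
  · linear_combination (norm := module) -e₁
  · linear_combination (norm := module) d₁ - e₂
  · linear_combination (norm := module) d₂ - e₃

theorem inner_le_of_mem_closure_convexHull {s : Set E} {d x : E} {r : ℝ}
    (hs : ∀ p ∈ s, ⟪p, d⟫ ≤ r) (hx : x ∈ closure (convexHull ℝ s)) : ⟪x, d⟫ ≤ r := by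
  have hclosed : IsClosed {x : E | ⟪x, d⟫ ≤ r} :=
    isClosed_le (continuous_id.inner continuous_const) continuous_const
  have hconvex : Convex ℝ {x : E | ⟪x, d⟫ ≤ r} :=
    convex_halfSpace_le ⟨fun a b => inner_add_left a b d, fun c a => real_inner_smul_left a d c⟩ r
  exact closure_minimal (convexHull_min hs hconvex) hclosed hx

end Projection

theorem inner_E3 (x y : E3) : ⟪x, y⟫ = x 0 * y 0 + x 1 * y 1 + x 2 * y 2 := by
  simp [PiLp.inner_apply, Fin.sum_univ_three, mul_comm]

theorem inner_pSeq (t : ℕ → ℝ) (m : ℕ) (a b e : ℝ) :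
    ⟪pSeq t m, !₂[a, b, e]⟫ = cos (t m) * a + sin (t m) * b + (-1) ^ m * e := by
  simp [inner_E3, pSeq]

def verticalSegment (a b : ℝ) : Set E3 := convexHull ℝ {!₂[a, b, 1], !₂[a, b, -1]}

theorem mem_verticalSegment {a b : ℝ} {v : E3} :
    v ∈ verticalSegment a b ↔ v 0 = a ∧ v 1 = b ∧ |v 2| ≤ 1 := by
  rw [verticalSegment, convexHull_pair, segment_eq_image]
  constructor
  · rintro ⟨θ, ⟨hθ₀, hθ₁⟩, rfl⟩
    refine ⟨by simp; ring, by simp; ring, abs_le.2 ⟨?_, ?_⟩⟩ <;> simp <;> linarith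
  · rintro ⟨h₀, h₁, h₂⟩
    obtain ⟨h₂l, h₂r⟩ := abs_le.1 h₂
    refine ⟨(1 - v 2) / 2, ⟨by linarith, by linarith⟩, ?_⟩
    ext i; fin_cases i <;> simp [h₀, h₁] <;> ring

theorem isProj_verticalSegment {a b : ℝ} {u : E3} (hu : |u 2| ≤ 1) :
    IsProj (verticalSegment a b) u !₂[a, b, u 2] := by
  refine ⟨mem_verticalSegment.2 ⟨by simp, by simp, by simpa using hu⟩, fun v hv => ?_⟩
  obtain ⟨hv₀, hv₁, -⟩ := mem_verticalSegment.1 hv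
  simp [inner_E3, hv₀, hv₁]

theorem isProj_C3_pSeq (t : ℕ → ℝ) {k : ℕ} (hk : 1 ≤ k) {K : ℝ} (hK : 0 ≤ K) :
    IsProj (C3 t) (pSeq t k + K • !₂[cos (t k), sin (t k), 0]) (pSeq t k) := by
  refine ⟨subset_closure (subset_convexHull ℝ _ ⟨k, hk, rfl⟩), fun v hv => ?_⟩
  have hvn : ⟪v, !₂[cos (t k), sin (t k), 0]⟫ ≤ 1 := by
    refine inner_le_of_mem_closure_convexHull ?_ hv
    rintro _ ⟨m, -, rfl⟩
    rw [inner_pSeq, mul_zero, add_zero, ← cos_sub]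
    exact cos_le_one _
  have hpn : ⟪pSeq t k, !₂[cos (t k), sin (t k), 0]⟫ = 1 := by
    rw [inner_pSeq, mul_zero, add_zero, ← cos_sub, sub_self, cos_zero]
  rw [add_sub_cancel_left, inner_smul_right, inner_sub_left, hpn]
  nlinarith

theorem apply_two_eq_of_mem_C3 {t : ℕ → ℝ} {k : ℕ} {γ : ℝ} (hγ : γ < 1)
    (hsep : ∀ m, 1 ≤ m → m ≠ k → cos (t m - t k) ≤ γ) {x : E3} (hx : x ∈ C3 t)
    (h₀ : x 0 = cos (t k)) (h₁ : x 1 = sin (t k)) : x 2 = (-1) ^ k := by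
  have hsq : (-1 : ℝ) ^ k * (-1) ^ k = 1 := by rw [← mul_pow]; norm_num
  have hsign : ∀ m : ℕ, |(-1 : ℝ) ^ m * (-1) ^ k| = 1 := fun m => by
    rw [abs_mul, abs_neg_one_pow, abs_neg_one_pow, one_mul]
  have hle : (-1) ^ k * x 2 ≤ 1 := by
    have := inner_le_of_mem_closure_convexHull (d := !₂[0, 0, (-1) ^ k]) (r := 1)
      (by rintro _ ⟨m, -, rfl⟩; simpa [inner_pSeq] using (abs_le.1 (hsign m).le).2) hx
    simpa [inner_E3, mul_comm] using this
  obtain ⟨s₀, hs₀, rfl⟩ : ∃ s₀ : ℝ, 0 < s₀ ∧ γ = 1 - 2 * s₀ := ⟨(1 - γ) / 2, by linarith, by ring⟩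
  -- among the generators, `⟪·, (cos t_k, sin t_k, -s₀ (-1)^k)⟫` attains its maximum only at `p_k`
  have hge : 1 ≤ (-1) ^ k * x 2 := by
    have := inner_le_of_mem_closure_convexHull
      (d := !₂[cos (t k), sin (t k), -s₀ * (-1) ^ k]) (r := 1 - s₀) ?_ hx
    · simp [inner_E3, h₀, h₁] at this
      nlinarith [sin_sq_add_cos_sq (t k)]
    · rintro _ ⟨m, hm, rfl⟩
      rw [inner_pSeq, ← cos_sub]
      rcases eq_or_ne m k with rfl | hmk
      · rw [sub_self, cos_zero]
        linear_combination -s₀ * hsq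
      · nlinarith [hsep m hm hmk, (abs_le.1 (hsign m).le).1]
  calc x 2 = (-1) ^ k * ((-1) ^ k * x 2) := by rw [← mul_assoc, hsq, one_mul]
    _ = (-1) ^ k := by rw [le_antisymm hle hge, mul_one]

section Admissible

variable {t : ℕ → ℝ}

theorem Admissible.pi_div_four_le (ht : Admissible t) {k : ℕ} (hk : 1 ≤ k) : π / 4 ≤ t k := by
  rw [← ht.2.1]
  exact ht.1.monotoneOn (Set.mem_Ici.2 le_rfl) (Set.mem_Ici.2 hk) hk

theorem Admissible.pi_div_four_lt (ht : Admissible t) {k : ℕ} (hk : 2 ≤ k) : π / 4 < t k := by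
  rw [← ht.2.1]
  exact ht.1 (Set.mem_Ici.2 le_rfl) (Set.mem_Ici.2 (by omega)) (by omega)

theorem Admissible.lt_pi_div_two (ht : Admissible t) {k : ℕ} (hk : 1 ≤ k) : t k < π / 2 := by
  have hle : t (k + 1) ≤ π / 2 := ge_of_tendsto ht.2.2 <| eventually_atTop.2
    ⟨k + 1, fun m hm => ht.1.monotoneOn (Set.mem_Ici.2 (by omega)) (Set.mem_Ici.2 (by omega)) hm⟩
  linarith [ht.1 (Set.mem_Ici.2 hk) (Set.mem_Ici.2 (by omega)) (Nat.lt_succ_self k)]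

theorem Admissible.exists_cos_sub_le (ht : Admissible t) {k : ℕ} (hk : 2 ≤ k) :
    ∃ γ < 1, ∀ m, 1 ≤ m → m ≠ k → cos (t m - t k) ≤ γ := by
  have hlt : ∀ {i j : ℕ}, 1 ≤ i → i < j → t i < t j := fun hi hij =>
    ht.1 (Set.mem_Ici.2 hi) (Set.mem_Ici.2 (by omega)) hij
  have hle : ∀ {i j : ℕ}, 1 ≤ i → i ≤ j → t i ≤ t j := fun hi hij =>
    ht.1.monotoneOn (Set.mem_Ici.2 hi) (Set.mem_Ici.2 (by omega)) hij
  have hwidth : ∀ {i j : ℕ}, 1 ≤ i → 1 ≤ j → t j - t i ≤ π := fun hi hj => by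
    linarith [ht.pi_div_four_le hi, ht.lt_pi_div_two hj, pi_pos]
  have hcos : ∀ {i j : ℕ} (δ : ℝ), 1 ≤ i → i < j → 0 ≤ δ → δ ≤ t j - t i →
      cos (t j - t i) ≤ cos δ := fun δ hi hij hδ hδle =>
    cos_le_cos_of_nonneg_of_le_pi hδ (hwidth hi (by omega)) hδle
  have hone : ∀ {i j : ℕ}, 1 ≤ i → i < j → cos (t j - t i) < 1 := fun hi hij => by
    rw [← cos_zero]
    exact cos_lt_cos_of_nonneg_of_le_pi le_rfl (hwidth hi (by omega)) (by linarith [hlt hi hij])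
  refine ⟨max (cos (t k - t (k - 1))) (cos (t (k + 1) - t k)),
    max_lt (hone (by omega) (by omega)) (hone (by omega) (by omega)), fun m hm hmk => ?_⟩
  rcases lt_or_gt_of_ne hmk with hmk | hkm
  · rw [← cos_neg, neg_sub]
    exact le_max_of_le_left <| hcos _ hm hmk
      (by linarith [hlt (i := k - 1) (j := k) (by omega) (by omega)])
      (by linarith [hle (i := m) (j := k - 1) hm (by omega)])
  · exact le_max_of_le_right <| hcos _ (by omega) hkm
      (by linarith [hlt (i := k) (j := k + 1) (by omega) (by omega)])
      (by linarith [hle (i := k + 1) (j := m) (by omega) hkm])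

end Admissible

def cycleEps (θ : ℝ) : ℝ := 2 * cos θ / (sin θ + cos θ)

theorem cycleEps_mem_Ioo {θ : ℝ} (h₁ : π / 4 < θ) (h₂ : θ < π / 2) : cycleEps θ ∈ Set.Ioo 0 1 := by
  have hc : 0 < cos θ := cos_pos_of_mem_Ioo ⟨by linarith [pi_pos], h₂⟩
  have hcs : cos θ < sin θ := by
    rw [← sin_pi_div_two_sub]
    exact sin_lt_sin_of_lt_of_le_pi_div_two (by linarith) (by linarith) (by linarith)
  have hd : 0 < sin θ + cos θ := by linarith
  exact ⟨div_pos (by linarith) hd, (div_lt_one hd).2 (by linarith)⟩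

theorem cycleEps_strictAntiOn : StrictAntiOn cycleEps (Set.Ioo 0 (π / 2)) := by
  rintro θ ⟨h₀, h₁⟩ θ' ⟨h₀', h₁'⟩ hθ
  have hc : 0 < cos θ := cos_pos_of_mem_Ioo ⟨by linarith, h₁⟩
  have hc' : 0 < cos θ' := cos_pos_of_mem_Ioo ⟨by linarith, h₁'⟩
  have hs : 0 < sin θ := sin_pos_of_pos_of_lt_pi h₀ (by linarith)
  have hs' : 0 < sin θ' := sin_pos_of_pos_of_lt_pi h₀' (by linarith)
  have hsub : 0 < sin (θ' - θ) := sin_pos_of_pos_of_lt_pi (by linarith) (by linarith)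
  rw [sin_sub] at hsub
  rw [cycleEps, cycleEps, div_lt_div_iff₀ (by linarith) (by linarith)]
  nlinarith

theorem tendsto_cycleEps_pi_div_two : Tendsto cycleEps (nhds (π / 2)) (nhds 0) := by
  have hcont : ContinuousAt cycleEps (π / 2) :=
    ((continuous_const.mul continuous_cos).continuousAt).div
      ((continuous_sin.add continuous_cos).continuousAt) (by simp)
  simpa [cycleEps] using hcont.tendsto

theorem exists_isCycleWithSupport_pSeq (t : ℕ → ℝ) {k : ℕ} (hk : 1 ≤ k)
    (hpos : 0 < sin (t k) + cos (t k)) :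
    ∃ u₁ u₂ u₃ w₁ w₂ : E3,
      IsCycleWithSupport C1 C2 (C3 t) (cycleEps (t k)) u₁ u₂ u₃ w₁ w₂ (pSeq t k) ∧
        u₁ 2 = (-1) ^ k ∧ u₂ 2 = (-1) ^ k ∧ u₃ 2 = (-1) ^ k := by
  set c := cos (t k) with hc
  set s := sin (t k) with hs
  set ε := cycleEps (t k) with hε
  set z : ℝ := (-1) ^ k
  have hz : |z| ≤ 1 := (abs_neg_one_pow k).le
  -- `u₂ = p_k + K v_k` and `u₃ = p_k + (1 - ε) K v_k` lie on the ray through `v_k = (c, s)`;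
  -- the planar part of `u₂ = (1 - ε)² u₃ + ε (1 - ε) (-2, 2) + ε (2, 2)` then forces
  -- `ε (2 - ε)⁻¹ = c / s`, i.e. `ε = cycleEps (t k)`, and determines `K`.
  have hd : 3 * s ^ 2 + c ^ 2 ≠ 0 := by nlinarith [sin_sq_add_cos_sq (t k)]
  obtain ⟨K, hK, hKeq⟩ : ∃ K : ℝ, 0 ≤ K ∧ K * (3 * s ^ 2 + c ^ 2) = (4 - 2 * s) * (s + c) :=
    ⟨_, div_nonneg (mul_nonneg (by linarith [sin_le_one (t k)]) hpos.le) (by positivity),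
      div_mul_cancel₀ _ hd⟩
  set u₂ := pSeq t k + K • !₂[c, s, 0]
  set u₃ := u₂ + ε • (pSeq t k - u₂)
  set u₁ := u₃ + ε • (!₂[-2, 2, z] - u₃)
  have h₂ : u₂ 2 = z := by simp [u₂, pSeq, z]
  have h₃ : u₃ 2 = z := by simp [u₃, h₂, pSeq, z]
  have h₁ : u₁ 2 = z := by simp [u₁, h₃]
  refine ⟨u₁, u₂, u₃, !₂[-2, 2, z], !₂[2, 2, z], ⟨?_, ?_, isProj_C3_pSeq t hk hK, rfl, ?_, rfl⟩,
    h₁, h₂, h₃⟩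
  · have := isProj_verticalSegment (a := -2) (b := 2) (h₃ ▸ hz)
    rwa [h₃] at this
  · have := isProj_verticalSegment (a := 2) (b := 2) (h₁ ▸ hz)
    rwa [h₁] at this
  · have hsc : s + c ≠ 0 := hpos.ne'
    ext i
    fin_cases i
    · simp [u₁, u₃, u₂, pSeq, hε, cycleEps, ← hc, ← hs]
      field_simp
      linear_combination 2 * c ^ 2 * hKeq
    · simp [u₁, u₃, u₂, pSeq, hε, cycleEps, ← hc, ← hs]
      field_simp
      linear_combination 2 * s * c * hKeq
    · simp [h₁, h₂]

theorem IsCycleWithSupport.eq_of_isCycle_C3 {t : ℕ → ℝ} {k : ℕ} {γ ε : ℝ} (hγ : γ < 1)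
    (hsep : ∀ m, 1 ≤ m → m ≠ k → cos (t m - t k) ≤ γ) (hε₀ : 0 < ε) (hε₂ : ε < 2)
    {u₁ u₂ u₃ w₁ w₂ y₁ y₂ y₃ : E3}
    (hu : IsCycleWithSupport C1 C2 (C3 t) ε u₁ u₂ u₃ w₁ w₂ (pSeq t k))
    (hy : IsCycle C1 C2 (C3 t) ε y₁ y₂ y₃) : y₁ = u₁ ∧ y₂ = u₂ ∧ y₃ = u₃ := by
  obtain ⟨x₁, x₂, x₃, hy⟩ := hy
  obtain ⟨d, rfl, rfl, rfl, hx₁, -, hx₃⟩ := hu.exists_eq_add hε₀ hε₂ hy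
  suffices d = 0 by simp [this]
  -- `C1` is vertical, so `d` is vertical; then `x₃ = p_k + d` lies over `v_k`
  obtain ⟨hw₀, hw₁, -⟩ := mem_verticalSegment.1 hu.1.1
  obtain ⟨hx₁₀, hx₁₁, -⟩ := mem_verticalSegment.1 (hx₁ ▸ hy.1.1)
  have hd₀ : d 0 = 0 := by simpa [hw₀] using hx₁₀
  have hd₁ : d 1 = 0 := by simpa [hw₁] using hx₁₁
  have hx₃₂ := apply_two_eq_of_mem_C3 hγ hsep (hx₃ ▸ hy.2.2.1.1)
    (by simp [hd₀, pSeq]) (by simp [hd₁, pSeq])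
  have hd₂ : d 2 = 0 := by simpa [pSeq] using hx₃₂
  ext i
  fin_cases i <;> assumption

theorem Admissible.existsUnique_isCycle_cycleEps_and_height {t : ℕ → ℝ} (ht : Admissible t)
    {k : ℕ} (hk : 2 ≤ k) :
    (∃! u : E3 × E3 × E3, IsCycle C1 C2 (C3 t) (cycleEps (t k)) u.1 u.2.1 u.2.2) ∧
      ∀ u₁ u₂ u₃ : E3, IsCycle C1 C2 (C3 t) (cycleEps (t k)) u₁ u₂ u₃ →
        u₁ 2 = (-1) ^ k ∧ u₂ 2 = (-1) ^ k ∧ u₃ 2 = (-1) ^ k := by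
  have hlo := ht.pi_div_four_lt hk
  have hhi := ht.lt_pi_div_two (k := k) (by omega)
  have hpos : 0 < sin (t k) + cos (t k) :=
    add_pos (sin_pos_of_pos_of_lt_pi (by linarith [pi_pos]) (by linarith))
      (cos_pos_of_mem_Ioo ⟨by linarith [pi_pos], hhi⟩)
  obtain ⟨hε₀, hε₁⟩ := cycleEps_mem_Ioo hlo hhi
  obtain ⟨γ, hγ, hsep⟩ := ht.exists_cos_sub_le hk
  obtain ⟨u₁, u₂, u₃, w₁, w₂, hu, h₁, h₂, h₃⟩ := exists_isCycleWithSupport_pSeq t (by omega) hpos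
  refine ⟨⟨(u₁, u₂, u₃), ⟨w₁, w₂, _, hu⟩, fun ⟨y₁, y₂, y₃⟩ hy => ?_⟩, fun y₁ y₂ y₃ hy => ?_⟩
  · obtain ⟨rfl, rfl, rfl⟩ := hu.eq_of_isCycle_C3 hγ hsep hε₀ (by linarith) hy
    rfl
  · obtain ⟨rfl, rfl, rfl⟩ := hu.eq_of_isCycle_C3 hγ hsep hε₀ (by linarith) hy
    exact ⟨h₁, h₂, h₃⟩

theorem Admissible.strictAnti_cycleEps {t : ℕ → ℝ} (ht : Admissible t) {g : ℕ → ℕ}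
    (hg : StrictMono g) (hg₂ : ∀ j, 2 ≤ g j) : StrictAnti fun j => cycleEps (t (g j)) :=
  fun i j hij => cycleEps_strictAntiOn
    ⟨by linarith [ht.pi_div_four_lt (hg₂ i), pi_pos], ht.lt_pi_div_two (by linarith [hg₂ i])⟩
    ⟨by linarith [ht.pi_div_four_lt (hg₂ j), pi_pos], ht.lt_pi_div_two (by linarith [hg₂ j])⟩
    (ht.1 (Set.mem_Ici.2 (by linarith [hg₂ i])) (Set.mem_Ici.2 (by linarith [hg₂ j])) (hg hij))

theorem Admissible.tendsto_cycleEps {t : ℕ → ℝ} (ht : Admissible t) {g : ℕ → ℕ}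
    (hg : StrictMono g) : Tendsto (fun j => cycleEps (t (g j))) atTop (nhds 0) :=
  tendsto_cycleEps_pi_div_two.comp (ht.2.2.comp hg.tendsto_atTop)

theorem stmt1 (t : ℕ → ℝ) (ht : Admissible t) :
    ∃ ε ε' : ℕ → ℝ, StrictAnti ε ∧ StrictAnti ε' ∧
      (∀ j, ε j ∈ Set.Ioo (0 : ℝ) 1) ∧ (∀ j, ε' j ∈ Set.Ioo (0 : ℝ) 1) ∧
      Tendsto ε atTop (nhds 0) ∧ Tendsto ε' atTop (nhds 0) ∧
      (∀ j, (∃! u : E3 × E3 × E3, IsCycle C1 C2 (C3 t) (ε j) u.1 u.2.1 u.2.2) ∧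
        ∀ u₁ u₂ u₃ : E3, IsCycle C1 C2 (C3 t) (ε j) u₁ u₂ u₃ →
          u₁ 2 = 1 ∧ u₂ 2 = 1 ∧ u₃ 2 = 1) ∧
      (∀ j, (∃! u : E3 × E3 × E3, IsCycle C1 C2 (C3 t) (ε' j) u.1 u.2.1 u.2.2) ∧
        ∀ u₁ u₂ u₃ : E3, IsCycle C1 C2 (C3 t) (ε' j) u₁ u₂ u₃ →
          u₁ 2 = -1 ∧ u₂ 2 = -1 ∧ u₃ 2 = -1) := by
  have heven : StrictMono fun j : ℕ => 2 * j + 2 := fun i j _ => show 2 * i + 2 < 2 * j + 2 by omega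
  have hodd : StrictMono fun j : ℕ => 2 * j + 3 := fun i j _ => show 2 * i + 3 < 2 * j + 3 by omega
  refine ⟨fun j => cycleEps (t (2 * j + 2)), fun j => cycleEps (t (2 * j + 3)),
    ht.strictAnti_cycleEps heven (fun _ => by omega),
    ht.strictAnti_cycleEps hodd (fun _ => by omega),
    fun j => cycleEps_mem_Ioo (ht.pi_div_four_lt (by omega)) (ht.lt_pi_div_two (by omega)),
    fun j => cycleEps_mem_Ioo (ht.pi_div_four_lt (by omega)) (ht.lt_pi_div_two (by omega)),
    ht.tendsto_cycleEps heven, ht.tendsto_cycleEps hodd, fun j => ?_, fun j => ?_⟩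
  · simpa [pow_succ, pow_mul] using
      ht.existsUnique_isCycle_cycleEps_and_height (k := 2 * j + 2) (by omega)
  · simpa [pow_succ, pow_mul] using
      ht.existsUnique_isCycle_cycleEps_and_height (k := 2 * j + 3) (by omega)
end
end

section
/- Let ε ∈ (0,1) and let (u₁',u₂',u₃') be an ε-cycle for the projected sets (C₁',C₂',C₃') in ℝ² with support (w₁',w₂',w₃'). Then there exists z ∈ [−1,1] such that the lifted triple ((u₁',z),(u₂',z),(u₃',z)) in ℝ³ is an ε-cycle for (C₁,C₂,C₃) with support ((w₁',z),(w₂',z),(w₃',z)). -/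
noncomputable section
open Real Filter

/-! The planar cycle lifts to every height `z`: at a common height the variational inequality in ℝ³
reduces to the planar one, because `projXY` maps each `Cᵢ` into `Cᵢ'`. For the vertical segments `C₁`,
`C₂` any `z ∈ [-1, 1]` keeps the lifted support point in the set. The height is dictated by `C₃`:
being compact, it projects onto `C₃'`, so `w₃'` is the shadow of some `x ∈ C₃` and `z := x 2` works. -/

def projXYL : E3 →L[ℝ] E2 := LinearMap.toContinuousLinearMap
  { toFun := projXY
    map_add' := fun x y => by ext i; fin_cases i <;> rfl
    map_smul' := fun c x => by ext i; fin_cases i <;> rfl }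

@[simp] lemma coe_projXYL : ⇑projXYL = projXY := rfl

@[simp] lemma projXY_liftZ (p : E2) (z : ℝ) : projXY (liftZ p z) = p := by
  ext i; fin_cases i <;> rfl

lemma liftZ_projXY (x : E3) : liftZ (projXY x) (x 2) = x := by
  ext i; fin_cases i <;> rfl

lemma liftZ_add_smul_sub (ε z : ℝ) (p q : E2) :
    liftZ (p + ε • (q - p)) z = liftZ p z + ε • (liftZ q z - liftZ p z) := by
  ext i; fin_cases i <;> simp [liftZ]

lemma inner_sub_liftZ (v : E3) (u w : E2) (z : ℝ) :
    inner ℝ (v - liftZ w z) (liftZ u z - liftZ w z) = inner ℝ (projXY v - w) (u - w) := by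
  simp [liftZ, projXY, PiLp.inner_apply, Fin.sum_univ_three, Fin.sum_univ_two]

lemma IsProj.liftZ {C : Set E3} {C' : Set E2} {u w : E2} (h : IsProj C' u w)
    (hC : projXY '' C ⊆ C') {z : ℝ} (hw : liftZ w z ∈ C) :
    IsProj C (liftZ u z) (liftZ w z) :=
  ⟨hw, fun v hv => (inner_sub_liftZ v u w z).trans_le (h.2 _ (hC ⟨v, hv, rfl⟩))⟩

lemma image_closure_convexHull_of_isBounded {E F : Type*} [NormedAddCommGroup E]
    [NormedSpace ℝ E] [ProperSpace E] [NormedAddCommGroup F] [NormedSpace ℝ F]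
    (f : E →L[ℝ] F) {s : Set E} (hs : Bornology.IsBounded s) :
    f '' closure (convexHull ℝ s) = closure (convexHull ℝ (f '' s)) := by
  refine subset_antisymm ?_ (closure_minimal (convexHull_min ?_ ?_) ?_)
  · calc f '' closure (convexHull ℝ s) ⊆ closure (f '' convexHull ℝ s) :=
          image_closure_subset_closure_image f.continuous
      _ = closure (convexHull ℝ (f '' s)) := congrArg closure (f.toLinearMap.image_convexHull s)
  · exact Set.image_mono (subset_closure.trans' (subset_convexHull ℝ s))
  · exact ((convex_convexHull ℝ s).closure).linear_image f.toLinearMap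
  · exact (((isBounded_convexHull.2 hs).isCompact_closure).image f.continuous).isClosed

def vertSeg (p : E2) : Set E3 := convexHull ℝ {liftZ p 1, liftZ p (-1)}

lemma projXY_image_vertSeg (p : E2) : projXY '' vertSeg p ⊆ {p} := by
  rintro _ ⟨v, hv, rfl⟩
  rw [vertSeg, convexHull_pair] at hv
  obtain ⟨a, b, -, -, hab, rfl⟩ := hv
  rw [← coe_projXYL, map_add, map_smul, map_smul]
  simp [← Module.add_smul, hab]

lemma liftZ_mem_vertSeg (p : E2) {z : ℝ} (hz : z ∈ Set.Icc (-1 : ℝ) 1) :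
    liftZ p z ∈ vertSeg p := by
  rw [vertSeg, convexHull_pair]
  exact ⟨(1 + z) / 2, (1 - z) / 2, by linarith [hz.1], by linarith [hz.2], by ring, by
    ext i; fin_cases i <;> simp [liftZ] <;> ring⟩

lemma C1_eq_vertSeg : C1 = vertSeg aPt := by
  simp [C1, vertSeg, liftZ, aPt]

lemma C2_eq_vertSeg : C2 = vertSeg bPt := by
  simp [C2, vertSeg, liftZ, bPt]

lemma norm_pSeq (t : ℕ → ℝ) (k : ℕ) : ‖pSeq t k‖ = √2 := by
  rw [EuclideanSpace.norm_eq]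
  have h : ((-1 : ℝ) ^ k) ^ 2 = 1 := by rw [← pow_mul, pow_mul', neg_one_sq, one_pow]
  simp [pSeq, Fin.sum_univ_three, h, cos_sq_add_sin_sq, one_add_one_eq_two]

lemma projXY_image_C3 (t : ℕ → ℝ) : projXY '' C3 t = C3' t := by
  have hbdd : Bornology.IsBounded (pSeq t '' {k | 1 ≤ k}) :=
    isBounded_iff_forall_norm_le.2 ⟨√2, by rintro _ ⟨k, -, rfl⟩; exact (norm_pSeq t k).le⟩
  have hpv : projXYL ∘ pSeq t = vSeq t := funext fun k => by ext i; fin_cases i <;> rfl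
  have := image_closure_convexHull_of_isBounded projXYL hbdd
  rwa [← Set.image_comp, hpv] at this

lemma C3_subset_preimage_Icc (t : ℕ → ℝ) : C3 t ⊆ {x | x 2 ∈ Set.Icc (-1 : ℝ) 1} := by
  refine closure_minimal (convexHull_min ?_ ?_) ?_
  · rintro _ ⟨k, -, rfl⟩
    rcases neg_one_pow_eq_or ℝ k with h | h <;> simp [pSeq, h]
  · exact (convex_Icc _ _).linear_preimage (EuclideanSpace.proj 2 : E3 →L[ℝ] ℝ).toLinearMap
  · exact isClosed_Icc.preimage (EuclideanSpace.proj 2 : E3 →L[ℝ] ℝ).continuous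

theorem stmt4_general (t : ℕ → ℝ) (ε : ℝ)
    (u₁' u₂' u₃' w₁' w₂' w₃' : E2)
    (hc : IsCycleWithSupport C1' C2' (C3' t) ε u₁' u₂' u₃' w₁' w₂' w₃') :
    ∃ z ∈ Set.Icc (-1 : ℝ) 1, IsCycleWithSupport C1 C2 (C3 t) ε
      (liftZ u₁' z) (liftZ u₂' z) (liftZ u₃' z)
      (liftZ w₁' z) (liftZ w₂' z) (liftZ w₃' z) := by
  obtain ⟨h₁, h₂, h₃, e₁, e₂, e₃⟩ := hc
  obtain rfl : w₁' = aPt := h₁.1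
  obtain rfl : w₂' = bPt := h₂.1
  obtain ⟨x, hx, rfl⟩ : w₃' ∈ projXY '' C3 t := projXY_image_C3 t ▸ h₃.1
  have hz := C3_subset_preimage_Icc t hx
  rw [C1_eq_vertSeg, C2_eq_vertSeg]
  refine ⟨x 2, hz, ?_, ?_, ?_, ?_, ?_, ?_⟩
  · exact h₁.liftZ (projXY_image_vertSeg aPt) (liftZ_mem_vertSeg aPt hz)
  · exact h₂.liftZ (projXY_image_vertSeg bPt) (liftZ_mem_vertSeg bPt hz)
  · exact h₃.liftZ (projXY_image_C3 t).subset ((liftZ_projXY x).symm ▸ hx)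
  · rw [e₁, liftZ_add_smul_sub]
  · rw [e₂, liftZ_add_smul_sub]
  · rw [e₃, liftZ_add_smul_sub]

theorem stmt4 (t : ℕ → ℝ) (ht : Admissible t) (ε : ℝ) (hε : ε ∈ Set.Ioo (0 : ℝ) 1)
    (u₁' u₂' u₃' w₁' w₂' w₃' : E2)
    (hc : IsCycleWithSupport C1' C2' (C3' t) ε u₁' u₂' u₃' w₁' w₂' w₃') :
    ∃ z ∈ Set.Icc (-1 : ℝ) 1, IsCycleWithSupport C1 C2 (C3 t) ε
      (liftZ u₁' z) (liftZ u₂' z) (liftZ u₃' z)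
      (liftZ w₁' z) (liftZ w₂' z) (liftZ w₃' z) :=
  stmt4_general t ε u₁' u₂' u₃' w₁' w₂' w₃' hc
end
end

section
/- For each ε ∈ (0,1) there exists exactly one ε-cycle (u₁',u₂',u₃') for the projected sets (C₁',C₂',C₃') in ℝ². -/
noncomputable section
open Real Filter

/-! Since `C₁'` and `C₂'` are singletons, the relaxed projections onto them are affine maps with
Lipschitz constant `1 - ε`, while the relaxed projection onto `C₃'` is nonexpansive. An ε-cycle is
determined by its second point, which must be a fixed point of the composite of the three steps;
that composite is a `(1 - ε)²`-contraction, so Banach's fixed point theorem gives exactly one cycle.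
-/

open Function

section Projection

variable {E : Type} [NormedAddCommGroup E] [InnerProductSpace ℝ E] {C : Set E}

theorem exists_isProj [CompleteSpace E] (hne : C.Nonempty) (hcl : IsClosed C)
    (hconv : Convex ℝ C) (u : E) : ∃ w, IsProj C u w := by
  obtain ⟨w, hwC, hw⟩ := exists_norm_eq_iInf_of_complete_convex hne hcl.isComplete hconv u
  refine ⟨w, hwC, fun v hv => ?_⟩
  rw [real_inner_comm]
  exact (norm_eq_iInf_iff_real_inner_le_zero hconv hwC).1 hw v hv

theorem IsProj.norm_sub_le {x y wx wy : E} (hx : IsProj C x wx) (hy : IsProj C y wy) :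
    ‖wx - wy‖ ≤ ‖x - y‖ := by
  have hxy : (0 : ℝ) ≤ inner ℝ (wx - wy) (x - wx) := by
    have := hx.2 wy hy.1
    rw [← neg_sub, inner_neg_left] at this
    linarith
  have hyx : inner ℝ (wx - wy) (y - wy) ≤ (0 : ℝ) := hy.2 wx hx.1
  have hsq : ‖wx - wy‖ ^ 2 ≤ inner ℝ (wx - wy) (x - y) := by
    have : x - y = (x - wx) - (y - wy) + (wx - wy) := by abel
    rw [this, inner_add_right, inner_sub_right, real_inner_self_eq_norm_sq]
    linarith
  nlinarith [real_inner_le_norm (wx - wy) (x - y), norm_nonneg (wx - wy), norm_nonneg (x - y)]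

theorem IsProj.unique {u w w' : E} (h : IsProj C u w) (h' : IsProj C u w') : w = w' := by
  simpa [sub_eq_zero] using h.norm_sub_le h'

theorem isProj_singleton (a u : E) : IsProj {a} u a :=
  ⟨rfl, fun v hv => by simp [Set.mem_singleton_iff.mp hv]⟩

theorem lipschitzWith_one_of_isProj {P : E → E} (hP : ∀ x, IsProj C x (P x)) :
    LipschitzWith 1 P :=
  LipschitzWith.of_dist_le_mul fun x y => by
    simpa [dist_eq_norm] using (hP x).norm_sub_le (hP y)

end Projection

section Relaxation

variable {E : Type} [NormedAddCommGroup E] [InnerProductSpace ℝ E]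

def relax (ε : ℝ) (w x : E) : E := x + ε • (w - x)

theorem relax_eq (ε : ℝ) (w x : E) : relax ε w x = (1 - ε) • x + ε • w := by
  unfold relax; module

theorem lipschitzWith_relax_const (ε : ℝ) (b : E) : LipschitzWith ‖1 - ε‖₊ (relax ε b) := by
  rw [show relax ε b = fun x => (1 - ε) • x + ε • b from funext (relax_eq ε b)]
  simpa using (lipschitzWith_smul (1 - ε)).add (LipschitzWith.const (ε • b))

theorem lipschitzWith_relax_self {ε : ℝ} (h0 : 0 ≤ ε) (h1 : ε ≤ 1) {P : E → E}
    (hP : LipschitzWith 1 P) : LipschitzWith 1 (fun x => relax ε (P x) x) := by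
  have hK : ‖1 - ε‖₊ + ‖ε‖₊ * 1 = 1 := by
    ext
    simp [abs_of_nonneg h0, abs_of_nonneg (sub_nonneg.2 h1)]
  rw [funext fun x => relax_eq ε (P x) x, ← hK]
  exact (lipschitzWith_smul (1 - ε)).add ((lipschitzWith_smul ε).comp hP)

theorem isCycle_singleton_singleton_iff {a b : E} {C : Set E} {ε : ℝ} {P : E → E}
    (hP : ∀ x, IsProj C x (P x)) {u₁ u₂ u₃ : E} :
    IsCycle {a} {b} C ε u₁ u₂ u₃ ↔
      u₃ = relax ε (P u₂) u₂ ∧ u₁ = relax ε a u₃ ∧ u₂ = relax ε b u₁ := by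
  constructor
  · rintro ⟨w₁, w₂, w₃, h₁, h₂, h₃, e₁, e₂, e₃⟩
    obtain rfl : w₁ = a := h₁.1
    obtain rfl : w₂ = b := h₂.1
    obtain rfl := h₃.unique (hP u₂)
    exact ⟨e₃, e₁, e₂⟩
  · rintro ⟨e₃, e₁, e₂⟩
    exact ⟨a, b, P u₂, isProj_singleton a u₃, isProj_singleton b u₁, hP u₂, e₁, e₂, e₃⟩

theorem existsUnique_isCycle_singleton_singleton [CompleteSpace E] (a b : E) {C : Set E}
    (hne : C.Nonempty) (hcl : IsClosed C) (hconv : Convex ℝ C) {ε : ℝ}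
    (hε : ε ∈ Set.Ioo (0 : ℝ) 1) :
    ∃! u : E × E × E, IsCycle {a} {b} C ε u.1 u.2.1 u.2.2 := by
  obtain ⟨h0, h1⟩ := hε
  choose P hP using exists_isProj hne hcl hconv
  let F : E → E := relax ε b ∘ relax ε a ∘ fun x => relax ε (P x) x
  have hK : ‖1 - ε‖₊ * ‖1 - ε‖₊ * 1 < 1 := by
    have : ‖1 - ε‖₊ < 1 := by
      rw [← NNReal.coe_lt_coe, coe_nnnorm, NNReal.coe_one, Real.norm_of_nonneg (by linarith)]
      linarith
    simpa using mul_lt_one_of_nonneg_of_lt_one_left (by positivity) this this.le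
  have hF : ContractingWith _ F :=
    ⟨hK, ((lipschitzWith_relax_const ε b).comp (lipschitzWith_relax_const ε a)).comp
      (lipschitzWith_relax_self h0.le h1.le (lipschitzWith_one_of_isProj hP))⟩
  have : Nonempty E := ⟨a⟩
  set x₀ := ContractingWith.fixedPoint F hF
  refine ⟨(relax ε a (relax ε (P x₀) x₀), x₀, relax ε (P x₀) x₀),
    (isCycle_singleton_singleton_iff hP).2 ⟨rfl, rfl, (hF.fixedPoint_isFixedPt).symm⟩, ?_⟩
  rintro ⟨u₁, u₂, u₃⟩ hu
  obtain ⟨h₃, h₁, h₂⟩ := (isCycle_singleton_singleton_iff hP).1 hu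
  dsimp only at h₁ h₂ h₃
  have hfix : IsFixedPt F u₂ := by
    simp only [IsFixedPt, F, comp_apply, ← h₃, ← h₁, ← h₂]
  obtain rfl : u₂ = x₀ := hF.fixedPoint_unique hfix
  subst h₃ h₁
  rfl

end Relaxation

theorem stmt5_general (t : ℕ → ℝ) (ε : ℝ) (hε : ε ∈ Set.Ioo (0 : ℝ) 1) :
    ∃! u : E2 × E2 × E2, IsCycle C1' C2' (C3' t) ε u.1 u.2.1 u.2.2 :=
  existsUnique_isCycle_singleton_singleton aPt bPt (C := C3' t)
    ⟨vSeq t 1, subset_closure (subset_convexHull ℝ _ ⟨1, Nat.le_refl 1, rfl⟩)⟩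
    isClosed_closure (convex_convexHull ℝ _).closure hε

theorem stmt5 (t : ℕ → ℝ) (ht : Admissible t) (ε : ℝ) (hε : ε ∈ Set.Ioo (0 : ℝ) 1) :
    ∃! u : E2 × E2 × E2, IsCycle C1' C2' (C3' t) ε u.1 u.2.1 u.2.2 :=
  stmt5_general t ε hε
end
end
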